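/- arXiv:cs/0506069 — 5 statements merged into one kernel-verified Lean document; each statement's English description precedes it below -/
import Mathlib

section
/- For every integer k ≥ 3 and every real α > 0, the quantity ω_C(α,k) = sup_{t∈[0,1]} Ω(t,α,k) is strictly positive. (This is the exponent governing the expected #DPLL-UC search-tree size, showing the expected tree size is exponential at every clause-to-variable ratio.) -/
/-!
Since `k - 1 ≥ 2`, the argument of the logarithm in `Ω(t, α, k)` is `1 - O(t²)` and lies in
`[1/2, 1]`, where `log y ≥ 2 (y - 1)`. Hence `t - 2αt² ≤ Ω(t, α, k) ≤ 1` on `[0, 1]`, and the point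
`t = 1/(2α + 1)` gives a positive value of `Ω`.
-/

/-- Ω(t,α,k) = t + α·log₂(1 − (k/2^k)·t^{k−1} + ((k−1)/2^k)·t^k) -/
noncomputable def Omega (t α : ℝ) (k : ℕ) : ℝ :=
  t + α * Real.logb 2 (1 - ((k : ℝ) / 2 ^ k) * t ^ (k - 1) + (((k : ℝ) - 1) / 2 ^ k) * t ^ k)

/-- ω_C(α,k) = sup_{t∈[0,1]} Ω(t,α,k) -/
noncomputable def omegaC (α : ℝ) (k : ℕ) : ℝ :=
  sSup ((fun t => Omega t α k) '' Set.Icc (0 : ℝ) 1)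

open Real Set

lemma Nat.two_mul_le_two_pow : ∀ k : ℕ, 2 * k ≤ 2 ^ k
  | 0 => by norm_num
  | k + 1 => by have := k.lt_two_pow_self; rw [pow_succ]; omega

lemma Nat.cast_div_two_pow_le_half (k : ℕ) : (k : ℝ) / 2 ^ k ≤ 1 / 2 := by
  rw [div_le_div_iff₀ (by positivity) two_pos, one_mul]
  exact_mod_cast (mul_comm k 2).le.trans k.two_mul_le_two_pow

lemma Real.two_mul_sub_one_le_log {y : ℝ} (hy : 1 / 2 ≤ y) (hy' : y ≤ 1) :
    2 * (y - 1) ≤ log y := by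
  have hy0 : 0 < y := by linarith
  have hchord : 2 * (y - 1) ≤ 1 - y⁻¹ := by
    rw [← sub_nonneg]
    have : 1 - y⁻¹ - 2 * (y - 1) = (1 - y) * (2 * y - 1) / y := by field_simp; ring
    rw [this]
    exact div_nonneg (mul_nonneg (by linarith) (by linarith)) hy0.le
  exact hchord.trans (one_sub_inv_le_log_of_pos hy0)

noncomputable def omegaArg (k : ℕ) (t : ℝ) : ℝ :=
  1 - ((k : ℝ) / 2 ^ k) * t ^ (k - 1) + (((k : ℝ) - 1) / 2 ^ k) * t ^ k

lemma Omega_eq (t α : ℝ) (k : ℕ) : Omega t α k = t + α * logb 2 (omegaArg k t) := rfl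

section omegaArg

variable {k : ℕ} {t : ℝ}

lemma omegaArg_le_one (hk : 1 ≤ k) (ht : t ∈ Icc (0 : ℝ) 1) : omegaArg k t ≤ 1 := by
  have htk : t ^ k = t ^ (k - 1) * t := by rw [← pow_succ, Nat.sub_add_cancel hk]
  have hcoef : ((k : ℝ) - 1) / 2 ^ k * t ≤ (k : ℝ) / 2 ^ k := by
    have hk' : (1 : ℝ) ≤ k := by exact_mod_cast hk
    calc ((k : ℝ) - 1) / 2 ^ k * t ≤ ((k : ℝ) - 1) / 2 ^ k :=
          mul_le_of_le_one_right (div_nonneg (by linarith) (by positivity)) ht.2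
      _ ≤ (k : ℝ) / 2 ^ k := by gcongr; linarith
  have := mul_le_mul_of_nonneg_right hcoef (pow_nonneg ht.1 (k - 1))
  rw [omegaArg, htk]
  nlinarith

lemma one_sub_sq_div_two_le_omegaArg (hk : 3 ≤ k) (ht : t ∈ Icc (0 : ℝ) 1) :
    1 - t ^ 2 / 2 ≤ omegaArg k t := by
  have hpow : t ^ (k - 1) ≤ t ^ 2 := pow_le_pow_of_le_one ht.1 ht.2 (by omega)
  have hlin : ((k : ℝ) / 2 ^ k) * t ^ (k - 1) ≤ 1 / 2 * t ^ 2 :=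
    mul_le_mul (Nat.cast_div_two_pow_le_half k) hpow (pow_nonneg ht.1 _) (by norm_num)
  have hk' : (1 : ℝ) ≤ k := by exact_mod_cast (by omega : 1 ≤ k)
  have hlead : 0 ≤ (((k : ℝ) - 1) / 2 ^ k) * t ^ k :=
    mul_nonneg (div_nonneg (by linarith) (by positivity)) (pow_nonneg ht.1 _)
  rw [omegaArg]
  linarith

end omegaArg

section Omega

variable {k : ℕ} {t α : ℝ}

lemma Omega_le_one (hk : 3 ≤ k) (hα : 0 ≤ α) (ht : t ∈ Icc (0 : ℝ) 1) : Omega t α k ≤ 1 := by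
  have harg : 0 ≤ omegaArg k t := by
    nlinarith [one_sub_sq_div_two_le_omegaArg hk ht, ht.2, ht.1]
  have := mul_nonpos_of_nonneg_of_nonpos hα
    (logb_nonpos one_lt_two harg (omegaArg_le_one (by omega) ht))
  rw [Omega_eq]
  linarith [ht.2]

lemma sub_two_mul_mul_sq_le_Omega (hk : 3 ≤ k) (hα : 0 ≤ α) (ht : t ∈ Icc (0 : ℝ) 1) :
    t - 2 * α * t ^ 2 ≤ Omega t α k := by
  have hlow := one_sub_sq_div_two_le_omegaArg hk ht
  have hlog : -t ^ 2 ≤ log (omegaArg k t) :=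
    calc -t ^ 2 ≤ 2 * (omegaArg k t - 1) := by linarith
      _ ≤ log (omegaArg k t) := two_mul_sub_one_le_log (by nlinarith [ht.2, ht.1])
          (omegaArg_le_one (by omega) ht)
  have hlog2 : 1 / 2 < log 2 := by linarith [log_two_gt_d9]
  have hlogb : -2 * t ^ 2 ≤ logb 2 (omegaArg k t) := by
    rw [logb, le_div_iff₀ (by linarith)]
    nlinarith [sq_nonneg t]
  rw [Omega_eq]
  nlinarith [mul_le_mul_of_nonneg_left hlogb hα]

end Omega

theorem omegaC_pos (k : ℕ) (hk : 3 ≤ k) (α : ℝ) (hα : 0 < α) :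
    0 < omegaC α k := by
  set t₀ := 1 / (2 * α + 1)
  have ht₀ : t₀ ∈ Icc (0 : ℝ) 1 :=
    ⟨by positivity, div_le_one_of_le₀ (by linarith) (by positivity)⟩
  have hpos : 0 < t₀ - 2 * α * t₀ ^ 2 := by
    have hinv : t₀ * (2 * α + 1) = 1 := div_mul_cancel₀ 1 (by positivity)
    have : t₀ - 2 * α * t₀ ^ 2 = t₀ ^ 2 := by linear_combination (-t₀) * hinv
    rw [this]
    positivity
  have hbdd : BddAbove ((fun t => Omega t α k) '' Icc (0 : ℝ) 1) := by
    refine ⟨1, ?_⟩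
    rintro _ ⟨t, ht, rfl⟩
    exact Omega_le_one hk hα.le ht
  calc 0 < t₀ - 2 * α * t₀ ^ 2 := hpos
    _ ≤ Omega t₀ α k := sub_two_mul_mul_sq_le_Omega hk hα.le ht₀
    _ ≤ omegaC α k := le_csSup hbdd ⟨t₀, ht₀, rfl⟩
end

section
/- For every integer k ≥ 3, the limit of α^{1/(k−2)}·ω_C(α,k) as α → ∞ equals ((k−2)/(k−1))·(2^k·ln 2/(k·(k−1)))^{1/(k−2)}. -/
/-!
Write the argument of the logarithm as `1 - δ(t)`, where
`δ(t) = t^{k-1}(k - (k-1)t)/2^k ∈ [0, 1/2]`, and use `-x - 2x² ≤ log (1 - x) ≤ -x`.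
After rescaling `α = β^{k-2}`, `t = s/β`, this gives
`β·Ω(s/β, α) ≤ s - (k - (k-1)t)·s^{k-1}/(2^k log 2)`, with equality up to `O(1/β)` at
bounded `s`. The limit profile `s - k s^{k-1}/(2^k log 2)` has maximum `(k-2)/(k-1)·r`,
attained at `s = r` where `k(k-1) r^{k-2} = 2^k log 2`, by the tangent line inequality for
`s ↦ s^{k-1}` at `r`. For bounded `s` the remaining term `(k-1)t·s^{k-1}` is `O(1/β)`; for
large `s` the factor `k - (k-1)t ≥ 1` alone makes `Ω` negative.
-/

open Real Filter Topology Set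

theorem sub_pow_succ_div_le (n : ℕ) {r s : ℝ} (hr : 0 < r) (hs : 0 ≤ s) :
    s - s ^ (n + 1) / ((n + 1) * r ^ n) ≤ n / (n + 1) * r := by
  have bernoulli := one_add_mul_sub_le_pow (a := s / r)
    (by linarith [div_nonneg hs hr.le]) (n + 1)
  have tangent : (n + 1) * r ^ n * s - n * r ^ (n + 1) ≤ s ^ (n + 1) := by
    rw [div_pow, le_div_iff₀ (by positivity)] at bernoulli
    refine le_of_eq_of_le ?_ bernoulli
    push_cast
    field_simp
    ring
  calc s - s ^ (n + 1) / ((n + 1) * r ^ n)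
      ≤ s - ((n + 1) * r ^ n * s - n * r ^ (n + 1)) / ((n + 1) * r ^ n) := by gcongr
    _ = n / (n + 1) * r := by field_simp; ring

theorem neg_sub_two_mul_sq_le_log_one_sub {x : ℝ} (hx : x ≤ 1 / 2) :
    -x - 2 * x ^ 2 ≤ log (1 - x) := by
  refine le_trans ?_ (one_sub_inv_le_log_of_pos (by linarith))
  rw [le_sub_iff_add_le, ← le_sub_iff_add_le', inv_le_iff_one_le_mul₀ (by linarith)]
  nlinarith [mul_nonneg (sq_nonneg x) (by linarith : 0 ≤ 1 - 2 * x)]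

noncomputable def omegaDefect (n : ℕ) (t : ℝ) : ℝ :=
  t ^ (n + 1) * (n + 2 - (n + 1) * t) / 2 ^ (n + 2)

theorem Omega_add_two_eq (n : ℕ) (t α : ℝ) :
    Omega t α (n + 2) = t + α * logb 2 (1 - omegaDefect n t) := by
  rw [Omega, omegaDefect, Nat.add_succ_sub_one]
  push_cast
  ring_nf

section Defect

variable {n : ℕ} {t : ℝ}

theorem omegaDefect_le (ht₀ : 0 ≤ t) :
    omegaDefect n t ≤ (n + 2) * t ^ (n + 1) / 2 ^ (n + 2) := by
  rw [omegaDefect]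
  gcongr ?_ / _
  nlinarith [mul_nonneg (pow_nonneg ht₀ (n + 1)) (mul_nonneg (Nat.cast_add_one_pos n).le ht₀)]

theorem pow_div_le_omegaDefect (ht₀ : 0 ≤ t) (ht₁ : t ≤ 1) :
    t ^ (n + 1) / 2 ^ (n + 2) ≤ omegaDefect n t := by
  rw [omegaDefect]
  gcongr ?_ / _
  exact le_mul_of_one_le_right (pow_nonneg ht₀ _) (by nlinarith)

theorem omegaDefect_nonneg (ht₀ : 0 ≤ t) (ht₁ : t ≤ 1) : 0 ≤ omegaDefect n t :=
  (div_nonneg (pow_nonneg ht₀ _) (by positivity)).trans (pow_div_le_omegaDefect ht₀ ht₁)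

theorem omegaDefect_le_half (ht₀ : 0 ≤ t) (ht₁ : t ≤ 1) : omegaDefect n t ≤ 1 / 2 := by
  have h : ((n + 2 : ℕ) : ℝ) ≤ 2 ^ (n + 1) := by exact_mod_cast Nat.lt_two_pow_self
  push_cast at h
  calc omegaDefect n t ≤ (n + 2) * t ^ (n + 1) / 2 ^ (n + 2) := omegaDefect_le ht₀
    _ ≤ 2 ^ (n + 1) * 1 / 2 ^ (n + 2) := by gcongr; exact pow_le_one₀ ht₀ ht₁
    _ = 1 / 2 := by rw [show (2 : ℝ) ^ (n + 2) = 2 ^ (n + 1) * 2 by ring]; field_simp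

end Defect

section OmegaBounds

variable {n : ℕ} {t α : ℝ}

theorem Omega_le_sub_omegaDefect (hα : 0 ≤ α) (ht₀ : 0 ≤ t) (ht₁ : t ≤ 1) :
    Omega t α (n + 2) ≤ t - α * omegaDefect n t / log 2 := by
  have hlog : log (1 - omegaDefect n t) ≤ -omegaDefect n t := by
    linarith [log_le_sub_one_of_pos (x := 1 - omegaDefect n t)
      (by linarith [omegaDefect_le_half (n := n) ht₀ ht₁])]
  rw [Omega_add_two_eq, logb]
  have := log_pos one_lt_two
  calc t + α * (log (1 - omegaDefect n t) / log 2) ≤ t + α * (-omegaDefect n t / log 2) := by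
        gcongr
    _ = _ := by ring

theorem sub_omegaDefect_le_Omega (hα : 0 ≤ α) (ht₀ : 0 ≤ t) (ht₁ : t ≤ 1) :
    t - α * (omegaDefect n t + 2 * omegaDefect n t ^ 2) / log 2 ≤ Omega t α (n + 2) := by
  have hlog := neg_sub_two_mul_sq_le_log_one_sub (omegaDefect_le_half (n := n) ht₀ ht₁)
  rw [Omega_add_two_eq, logb]
  have := log_pos one_lt_two
  calc t - α * (omegaDefect n t + 2 * omegaDefect n t ^ 2) / log 2
        = t + α * ((-omegaDefect n t - 2 * omegaDefect n t ^ 2) / log 2) := by ring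
    _ ≤ _ := by gcongr

theorem Omega_le_omegaC (hα : 0 ≤ α) (ht₀ : 0 ≤ t) (ht₁ : t ≤ 1) :
    Omega t α (n + 2) ≤ omegaC α (n + 2) := by
  refine le_csSup ⟨1, forall_mem_image.2 fun t' ⟨ht₀', ht₁'⟩ => ?_⟩
    (mem_image_of_mem _ ⟨ht₀, ht₁⟩)
  have := log_pos one_lt_two
  have := omegaDefect_nonneg (n := n) ht₀' ht₁'
  calc Omega t' α (n + 2) ≤ t' - α * omegaDefect n t' / log 2 :=
        Omega_le_sub_omegaDefect hα ht₀' ht₁'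
    _ ≤ 1 := (sub_le_self _ (by positivity)).trans ht₁'

end OmegaBounds

theorem omegaC_le {α B : ℝ} {k : ℕ} (h : ∀ t ∈ Icc (0 : ℝ) 1, Omega t α k ≤ B) :
    omegaC α k ≤ B :=
  csSup_le ((nonempty_Icc.2 zero_le_one).image _) (forall_mem_image.2 h)

section Rescaling

variable {n : ℕ} {r β t : ℝ}

theorem mul_Omega_pow_le_sub (hβ : 0 < β) (ht₀ : 0 ≤ t) (ht₁ : t ≤ 1) :
    β * Omega t (β ^ n) (n + 2) ≤
      β * t - (β * t) ^ (n + 1) * (n + 2 - (n + 1) * t) / (2 ^ (n + 2) * log 2) := by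
  have := log_pos one_lt_two
  calc β * Omega t (β ^ n) (n + 2) ≤ β * (t - β ^ n * omegaDefect n t / log 2) := by
        gcongr
        exact Omega_le_sub_omegaDefect (by positivity) ht₀ ht₁
    _ = _ := by rw [omegaDefect]; field_simp; ring

theorem mul_Omega_pow_le (hn : 1 ≤ n) (hr₀ : 0 < r)
    (hr : (n + 1) * (n + 2) * r ^ n = 2 ^ (n + 2) * log 2)
    (hβ : 0 < β) (ht₀ : 0 ≤ t) (ht₁ : t ≤ 1) :
    β * Omega t (β ^ n) (n + 2) ≤ n / (n + 1) * r +
      (n + 1) * (2 ^ (n + 2) * log 2 + 1) ^ (n + 2) / (2 ^ (n + 2) * log 2) / β := by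
  set P : ℝ := 2 ^ (n + 2) * log 2
  set s := β * t with hs_def
  have hP : 0 < P := by positivity
  have hs₀ : 0 ≤ s := by positivity
  refine (mul_Omega_pow_le_sub hβ ht₀ ht₁).trans ?_
  rcases le_or_gt s (P + 1) with hs | hs
  · have hprofile : s - s ^ (n + 1) * (n + 2) / P ≤ n / (n + 1) * r := by
      convert sub_pow_succ_div_le n hr₀ hs₀ using 2
      rw [← hr]; field_simp
    have herror : s ^ (n + 1) * t ≤ (P + 1) ^ (n + 2) / β := by
      rw [le_div_iff₀ hβ, mul_assoc, mul_comm t, ← hs_def, ← pow_succ]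
      gcongr
    calc s - s ^ (n + 1) * (n + 2 - (n + 1) * t) / P
        = s - s ^ (n + 1) * (n + 2) / P + (n + 1) * (s ^ (n + 1) * t) / P := by ring
      _ ≤ n / (n + 1) * r + (n + 1) * ((P + 1) ^ (n + 2) / β) / P := by gcongr
      _ = _ := by ring
  · have hs₁ : 1 ≤ s := by linarith [hP]
    have hpow : s * s ≤ s ^ (n + 1) := by
      rw [pow_succ']; exact mul_le_mul_of_nonneg_left (le_self_pow₀ hs₁ (by omega)) hs₀
    have hfactor : 1 ≤ (n + 2 - (n + 1) * t : ℝ) := by nlinarith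
    have hneg : s ≤ s ^ (n + 1) * (n + 2 - (n + 1) * t) / P := by
      rw [le_div_iff₀ hP]; nlinarith
    have : 0 ≤ n / (n + 1) * r := by positivity
    have : 0 ≤ (n + 1) * (P + 1) ^ (n + 2) / P / β := by positivity
    linarith

theorem mul_omegaC_pow_le (hn : 1 ≤ n) (hr₀ : 0 < r)
    (hr : (n + 1) * (n + 2) * r ^ n = 2 ^ (n + 2) * log 2) (hβ : 0 < β) :
    β * omegaC (β ^ n) (n + 2) ≤ n / (n + 1) * r +
      (n + 1) * (2 ^ (n + 2) * log 2 + 1) ^ (n + 2) / (2 ^ (n + 2) * log 2) / β := by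
  rw [← le_div_iff₀' hβ]
  refine omegaC_le fun t ⟨ht₀, ht₁⟩ => ?_
  rw [le_div_iff₀' hβ]
  exact mul_Omega_pow_le hn hr₀ hr hβ ht₀ ht₁

theorem le_mul_omegaC_pow (hr₀ : 0 < r) (hr : (n + 1) * (n + 2) * r ^ n = 2 ^ (n + 2) * log 2)
    (hβ : 1 ≤ β) (hrβ : r ≤ β) :
    n / (n + 1) * r - 2 * (n + 2) * r ^ (n + 2) / ((n + 1) * 2 ^ (n + 2)) / β ≤
      β * omegaC (β ^ n) (n + 2) := by
  have hβ₀ : 0 < β := by linarith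
  have ht₀ : 0 ≤ r / β := by positivity
  have ht₁ : r / β ≤ 1 := (div_le_one hβ₀).2 hrβ
  set u : ℝ := (n + 2) * (r / β) ^ (n + 1) / 2 ^ (n + 2)
  have hlog : log 2 = (n + 1) * (n + 2) * r ^ n / 2 ^ (n + 2) := by
    rw [hr]; field_simp
  have := omegaDefect_nonneg (n := n) ht₀ ht₁
  have := omegaDefect_le (n := n) ht₀
  have := log_pos one_lt_two
  calc n / (n + 1) * r - 2 * (n + 2) * r ^ (n + 2) / ((n + 1) * 2 ^ (n + 2)) / β
      ≤ n / (n + 1) * r - 2 * (n + 2) * r ^ (n + 2) / ((n + 1) * 2 ^ (n + 2)) / β ^ (n + 1) := by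
        gcongr
        exact le_self_pow₀ hβ (by omega)
    _ = β * (r / β - β ^ n * (u + 2 * u ^ 2) / log 2) := by
        rw [hlog]; simp only [u, div_pow]; field_simp; ring
    _ ≤ β * (r / β - β ^ n *
          (omegaDefect n (r / β) + 2 * omegaDefect n (r / β) ^ 2) / log 2) := by
        gcongr
    _ ≤ β * Omega (r / β) (β ^ n) (n + 2) := by
        gcongr
        exact sub_omegaDefect_le_Omega (by positivity) ht₀ ht₁
    _ ≤ β * omegaC (β ^ n) (n + 2) := by
        gcongr
        exact Omega_le_omegaC (by positivity) ht₀ ht₁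

end Rescaling

theorem tendsto_of_sub_div_le_of_le_add_div {f : ℝ → ℝ} {L C₁ C₂ : ℝ}
    (h₁ : ∀ᶠ x in atTop, L - C₁ / x ≤ f x)
    (h₂ : ∀ᶠ x in atTop, f x ≤ L + C₂ / x) :
    Tendsto f atTop (𝓝 L) := by
  have hlim (C : ℝ) : Tendsto (fun x : ℝ => L + C / x) atTop (𝓝 L) := by
    simpa using tendsto_const_nhds.add ((tendsto_const_nhds (x := C)).div_atTop tendsto_id)
  refine tendsto_of_tendsto_of_tendsto_of_le_of_le' ?_ (hlim C₂) h₁ h₂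
  simpa only [sub_eq_add_neg, neg_div] using hlim (-C₁)

theorem tendsto_mul_omegaC_pow {n : ℕ} {r : ℝ} (hn : 1 ≤ n) (hr₀ : 0 < r)
    (hr : (n + 1) * (n + 2) * r ^ n = 2 ^ (n + 2) * log 2) :
    Tendsto (fun β : ℝ => β * omegaC (β ^ n) (n + 2)) atTop (𝓝 (n / (n + 1) * r)) := by
  refine tendsto_of_sub_div_le_of_le_add_div
    ((eventually_ge_atTop 1).and (eventually_ge_atTop r) |>.mono
      fun β ⟨hβ, hrβ⟩ => le_mul_omegaC_pow hr₀ hr hβ hrβ)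
    ((eventually_gt_atTop 0).mono fun _ hβ => mul_omegaC_pow_le hn hr₀ hr hβ)

theorem omegaC_asymptotic (k : ℕ) (hk : 3 ≤ k) :
    Filter.Tendsto (fun α : ℝ => α ^ ((1 : ℝ) / ((k : ℝ) - 2)) * omegaC α k) Filter.atTop
      (nhds (((k : ℝ) - 2) / ((k : ℝ) - 1) *
        (2 ^ k * Real.log 2 / ((k : ℝ) * ((k : ℝ) - 1))) ^ ((1 : ℝ) / ((k : ℝ) - 2)))) := by
  obtain ⟨n, rfl⟩ : ∃ n, k = n + 2 := ⟨k - 2, by omega⟩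
  have hn : 1 ≤ n := by omega
  have hbase : 0 ≤ 2 ^ (n + 2) * log 2 / ((n + 2) * (n + 1)) := by positivity
  set r := (2 ^ (n + 2) * log 2 / ((n + 2) * (n + 1))) ^ ((n : ℝ)⁻¹)
  have hr : (n + 1) * (n + 2) * r ^ n = 2 ^ (n + 2) * log 2 := by
    rw [rpow_inv_natCast_pow hbase (by omega)]
    field_simp
  have hr₀ : 0 < r := by positivity
  push_cast
  simp only [add_sub_cancel_right, show (n : ℝ) + 2 - 1 = n + 1 by ring, one_div]
  refine ((tendsto_mul_omegaC_pow hn hr₀ hr).comp (tendsto_rpow_atTop (y := (n : ℝ)⁻¹)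
    (inv_pos.2 (Nat.cast_pos.2 hn)))).congr' ?_
  filter_upwards [eventually_ge_atTop 0] with α hα
  simp [rpow_inv_natCast_pow hα (by omega : n ≠ 0)]
end

section
/- For all real numbers x₁, x₂, x₃, μ and all natural numbers C₁ ≥ 1, C₂, C₃, the following identity holds: Σ_{z₃=0}^{C₃} Σ_{w₂=0}^{z₃} Σ_{z₂=0}^{C₂} Σ_{w₁=0}^{z₂} Σ_{z₁=0}^{C₁−1} C(C₃,z₃)·(3μ)^{z₃}·(1−3μ)^{C₃−z₃} · C(z₃,w₂)·(1/2)^{z₃} · C(C₂,z₂)·(2μ)^{z₂}·(1−2μ)^{C₂−z₂} · C(z₂,w₁)·(1/2)^{z₂} · C(C₁−1,z₁)·μ^{z₁}·(1−μ)^{C₁−1−z₁} · (1/2)^{z₁} · x₁^{C₁−1−z₁+w₁} · x₂^{C₂−z₂+w₂} · x₃^{C₃−z₃} = f₁^{C₁−1} · f₂^{C₂} · f₃^{C₃}, where f₁ = x₁ + (μ/2)(1−2x₁), f₂ = x₂ + μ(x₁+1−2x₂), f₃ = x₃ + (3μ/2)(x₂+1−2x₃). (This is the generating-function identity for the unit-propagation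 transition kernel M_P of #DPLL-UC.) -/
/-!
The three clause lengths contribute independently, so the sum factorises into one factor per
length. Each factor is a binomial expansion: a clause either contains the propagated variable
(probability `k μ`) or not, and for 2- and 3-clauses the inner sum over which of the hit clauses
get shortened is itself binomial and collapses to `(x + 1) ^ z` before the outer one is summed.
-/

open Finset

section Binomial

variable {R : Type*} [CommSemiring R]

theorem sum_range_choose_mul_pow_mul_pow (p q c a : R) (n : ℕ) :
    ∑ z ∈ range (n + 1), (n.choose z : R) * p ^ z * q ^ (n - z) * c ^ z * a ^ (n - z) =
      (p * c + q * a) ^ n := by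
  rw [add_pow]
  refine sum_congr rfl fun z _ => ?_
  rw [mul_pow, mul_pow]
  ring

theorem sum_range_choose_mul_pow_add_one (b : R) (n : ℕ) :
    ∑ w ∈ range (n + 1), (n.choose w : R) * b ^ w = (b + 1) ^ n := by
  rw [add_pow]
  exact sum_congr rfl fun w _ => by rw [one_pow, mul_one, mul_comm]

theorem sum_range_choose_mul_sum_range_choose (p q c a b : R) (n : ℕ) :
    ∑ z ∈ range (n + 1), ∑ w ∈ range (z + 1),
        (n.choose z : R) * p ^ z * q ^ (n - z) * z.choose w * c ^ z * a ^ (n - z) * b ^ w =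
      (p * (c * (b + 1)) + q * a) ^ n := by
  rw [← sum_range_choose_mul_pow_mul_pow]
  refine sum_congr rfl fun z _ => ?_
  have inner : ∑ w ∈ range (z + 1),
      (n.choose z : R) * p ^ z * q ^ (n - z) * z.choose w * c ^ z * a ^ (n - z) * b ^ w =
        (n.choose z : R) * p ^ z * q ^ (n - z) * c ^ z * a ^ (n - z) *
          ∑ w ∈ range (z + 1), (z.choose w : R) * b ^ w := by
    rw [mul_sum]
    exact sum_congr rfl fun w _ => by ring
  rw [inner, sum_range_choose_mul_pow_add_one, mul_pow]
  ring

end Binomial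

open Finset in
theorem unit_propagation_generating_function_general (x₁ x₂ x₃ μ : ℝ) (C₁ C₂ C₃ : ℕ) :
    (∑ z₃ ∈ range (C₃ + 1), ∑ w₂ ∈ range (z₃ + 1),
     ∑ z₂ ∈ range (C₂ + 1), ∑ w₁ ∈ range (z₂ + 1),
     ∑ z₁ ∈ range (C₁ - 1 + 1),
       (C₃.choose z₃ : ℝ) * (3 * μ) ^ z₃ * (1 - 3 * μ) ^ (C₃ - z₃) *
       (z₃.choose w₂ : ℝ) * (1 / 2) ^ z₃ *
       (C₂.choose z₂ : ℝ) * (2 * μ) ^ z₂ * (1 - 2 * μ) ^ (C₂ - z₂) *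
       (z₂.choose w₁ : ℝ) * (1 / 2) ^ z₂ *
       ((C₁ - 1).choose z₁ : ℝ) * μ ^ z₁ * (1 - μ) ^ (C₁ - 1 - z₁) * (1 / 2) ^ z₁ *
       x₁ ^ (C₁ - 1 - z₁ + w₁) * x₂ ^ (C₂ - z₂ + w₂) * x₃ ^ (C₃ - z₃)) =
    (x₁ + (μ / 2) * (1 - 2 * x₁)) ^ (C₁ - 1) *
    (x₂ + μ * (x₁ + 1 - 2 * x₂)) ^ C₂ *
    (x₃ + (3 * μ / 2) * (x₂ + 1 - 2 * x₃)) ^ C₃ := by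
  calc _
    _ = ∑ z₃ ∈ range (C₃ + 1), ∑ w₂ ∈ range (z₃ + 1),
          ∑ z₂ ∈ range (C₂ + 1), ∑ w₁ ∈ range (z₂ + 1), ∑ z₁ ∈ range (C₁ - 1 + 1),
            (C₃.choose z₃ : ℝ) * (3 * μ) ^ z₃ * (1 - 3 * μ) ^ (C₃ - z₃) *
                z₃.choose w₂ * (1 / 2) ^ z₃ * x₃ ^ (C₃ - z₃) * x₂ ^ w₂ *
              ((C₂.choose z₂ : ℝ) * (2 * μ) ^ z₂ * (1 - 2 * μ) ^ (C₂ - z₂) *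
                  z₂.choose w₁ * (1 / 2) ^ z₂ * x₂ ^ (C₂ - z₂) * x₁ ^ w₁ *
                (((C₁ - 1).choose z₁ : ℝ) * μ ^ z₁ * (1 - μ) ^ (C₁ - 1 - z₁) * (1 / 2) ^ z₁ *
                  x₁ ^ (C₁ - 1 - z₁))) := by
      refine sum_congr rfl fun _ _ => sum_congr rfl fun _ _ => sum_congr rfl fun _ _ =>
        sum_congr rfl fun _ _ => sum_congr rfl fun _ _ => ?_
      rw [pow_add, pow_add]
      ring
    _ = _ := by
      simp only [← mul_sum, ← sum_mul]
      rw [sum_range_choose_mul_sum_range_choose, sum_range_choose_mul_sum_range_choose,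
        sum_range_choose_mul_pow_mul_pow]
      ring

open Finset in
/-- Generating-function identity for the unit-propagation transition kernel M_P of #DPLL-UC. -/
theorem unit_propagation_generating_function (x₁ x₂ x₃ μ : ℝ) (C₁ C₂ C₃ : ℕ) (hC₁ : 1 ≤ C₁) :
    (∑ z₃ ∈ range (C₃ + 1), ∑ w₂ ∈ range (z₃ + 1),
     ∑ z₂ ∈ range (C₂ + 1), ∑ w₁ ∈ range (z₂ + 1),
     ∑ z₁ ∈ range (C₁ - 1 + 1),
       (C₃.choose z₃ : ℝ) * (3 * μ) ^ z₃ * (1 - 3 * μ) ^ (C₃ - z₃) *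
       (z₃.choose w₂ : ℝ) * (1 / 2) ^ z₃ *
       (C₂.choose z₂ : ℝ) * (2 * μ) ^ z₂ * (1 - 2 * μ) ^ (C₂ - z₂) *
       (z₂.choose w₁ : ℝ) * (1 / 2) ^ z₂ *
       ((C₁ - 1).choose z₁ : ℝ) * μ ^ z₁ * (1 - μ) ^ (C₁ - 1 - z₁) * (1 / 2) ^ z₁ *
       x₁ ^ (C₁ - 1 - z₁ + w₁) * x₂ ^ (C₂ - z₂ + w₂) * x₃ ^ (C₃ - z₃)) =
    (x₁ + (μ / 2) * (1 - 2 * x₁)) ^ (C₁ - 1) *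
    (x₂ + μ * (x₁ + 1 - 2 * x₂)) ^ C₂ *
    (x₃ + (3 * μ / 2) * (x₂ + 1 - 2 * x₃)) ^ C₃ :=
  unit_propagation_generating_function_general x₁ x₂ x₃ μ C₁ C₂ C₃
end

section
/- For all real numbers x₁, x₂, x₃, μ and all natural numbers C₂, C₃, the following identity holds: 2 · Σ_{z₃=0}^{C₃} Σ_{w₂=0}^{z₃} Σ_{z₂=0}^{C₂} Σ_{w₁=0}^{z₂} C(C₃,z₃)·(3μ)^{z₃}·(1−3μ)^{C₃−z₃} · C(z₃,w₂)·(1/2)^{z₃} · C(C₂,z₂)·(2μ)^{z₂}·(1−2μ)^{C₂−z₂} · C(z₂,w₁)·(1/2)^{z₂} · x₁^{w₁} · x₂^{C₂−z₂+w₂} · x₃^{C₃−z₃} = 2 · f₂^{C₂} · f₃^{C₃}, where f₂ = x₂ + μ(x₁+1−2x₂) and f₃ = x₃ + (3μ/2)(x₂+1−2x₃). (This is the generating-function identity for the variable-splitting transition kernel M_UC of #DPLL-UC.) -/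
/-! Since `x₂ ^ (C₂ - z₂ + w₂) = x₂ ^ (C₂ - z₂) * x₂ ^ w₂`, the quadruple sum is the product of a
sum over the 3-clauses and one over the 2-clauses. Each is a binomially thinned binomial: a clause
is hit with probability `p` (else it contributes `q`), and a hit clause is then shortened with
probability `1/2` (contributing `x`) or satisfied (contributing `1`), so by the binomial theorem
twice it equals `(p * (x + 1) / 2 + q) ^ n`. -/

open Finset

theorem sum_range_choose_mul_pow {R : Type*} [CommSemiring R] (x : R) (n : ℕ) :
    ∑ k ∈ range (n + 1), (n.choose k : R) * x ^ k = (x + 1) ^ n := by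
  simp [add_pow, mul_comm]

theorem sum_choose_mul_sum_choose_mul_pow {R : Type*} [CommSemiring R] (p q x : R) (n : ℕ) :
    ∑ z ∈ range (n + 1), ∑ w ∈ range (z + 1),
      (n.choose z : R) * p ^ z * q ^ (n - z) * ((z.choose w : R) * x ^ w) =
    (p * (x + 1) + q) ^ n := by
  simp_rw [← mul_sum, sum_range_choose_mul_pow]
  rw [add_pow]
  exact sum_congr rfl fun _ _ => by rw [mul_pow]; ring

/-- Generating-function identity for the variable-splitting transition kernel M_UC of #DPLL-UC. -/
theorem variable_splitting_generating_function (x₁ x₂ x₃ μ : ℝ) (C₂ C₃ : ℕ) :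
    (2 * ∑ z₃ ∈ range (C₃ + 1), ∑ w₂ ∈ range (z₃ + 1),
     ∑ z₂ ∈ range (C₂ + 1), ∑ w₁ ∈ range (z₂ + 1),
       (C₃.choose z₃ : ℝ) * (3 * μ) ^ z₃ * (1 - 3 * μ) ^ (C₃ - z₃) *
       (z₃.choose w₂ : ℝ) * (1 / 2) ^ z₃ *
       (C₂.choose z₂ : ℝ) * (2 * μ) ^ z₂ * (1 - 2 * μ) ^ (C₂ - z₂) *
       (z₂.choose w₁ : ℝ) * (1 / 2) ^ z₂ *
       x₁ ^ w₁ * x₂ ^ (C₂ - z₂ + w₂) * x₃ ^ (C₃ - z₃)) =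
    2 * (x₂ + μ * (x₁ + 1 - 2 * x₂)) ^ C₂ *
    (x₃ + (3 * μ / 2) * (x₂ + 1 - 2 * x₃)) ^ C₃ := by
  have factor :
      (∑ z₃ ∈ range (C₃ + 1), ∑ w₂ ∈ range (z₃ + 1),
       ∑ z₂ ∈ range (C₂ + 1), ∑ w₁ ∈ range (z₂ + 1),
         (C₃.choose z₃ : ℝ) * (3 * μ) ^ z₃ * (1 - 3 * μ) ^ (C₃ - z₃) *
         (z₃.choose w₂ : ℝ) * (1 / 2) ^ z₃ *
         (C₂.choose z₂ : ℝ) * (2 * μ) ^ z₂ * (1 - 2 * μ) ^ (C₂ - z₂) *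
         (z₂.choose w₁ : ℝ) * (1 / 2) ^ z₂ *
         x₁ ^ w₁ * x₂ ^ (C₂ - z₂ + w₂) * x₃ ^ (C₃ - z₃)) =
      (∑ z₃ ∈ range (C₃ + 1), ∑ w₂ ∈ range (z₃ + 1),
        (C₃.choose z₃ : ℝ) * (3 * μ * (1 / 2)) ^ z₃ * ((1 - 3 * μ) * x₃) ^ (C₃ - z₃) *
          ((z₃.choose w₂ : ℝ) * x₂ ^ w₂)) *
      (∑ z₂ ∈ range (C₂ + 1), ∑ w₁ ∈ range (z₂ + 1),
        (C₂.choose z₂ : ℝ) * (2 * μ * (1 / 2)) ^ z₂ * ((1 - 2 * μ) * x₂) ^ (C₂ - z₂) *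
          ((z₂.choose w₁ : ℝ) * x₁ ^ w₁)) := by
    simp_rw [sum_mul, mul_sum]
    refine sum_congr rfl fun _ _ => sum_congr rfl fun _ _ =>
      sum_congr rfl fun _ _ => sum_congr rfl fun _ _ => ?_
    simp only [mul_pow, pow_add]
    ring
  rw [factor, sum_choose_mul_sum_choose_mul_pow, sum_choose_mul_sum_choose_mul_pow]
  ring
end

section
/- Let N ≥ 1 and M ≥ 0 be integers and let (G_T)_{0 ≤ T ≤ N} be the family of functions defined by the #DPLL-UC generating-function recurrence with initial condition G_0(x₁,x₂,x₃) = x₃^M. Then for every T with 0 ≤ T ≤ N, the conservation identity 2^{N−T}·G_T(1/2, 3/4, 7/8) + Σ_{H=0}^{T−1} 2^{N−H}·G_H(0,0,0) = 2^N·(7/8)^M holds. (The point (1/2, 3/4, 7/8) is a fixed point of the coefficient maps f₁, f₂, f₃ at every height, and the identity expresses exact conservation of the expected number of satisfying assignments.) -/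
/-! The point p = (1/2, 3/4, 7/8) is fixed by f₁, f₂, f₃ whatever μ is, and at p the weights of the
recurrence are 1/f₁ = 2 and 2 − 1/f₁ = 0, so G_{T+1}(p) = 2·(G_T(p) − G_T(0,0,0)). Weighting by
2^{N−T−1}, each step moves exactly 2^{N−T}·G_T(0,0,0) from the first term into the sum, so the
left-hand side is the same for every T, and at T = 0 it equals 2^N·(7/8)^M. -/

/-- The #DPLL-UC generating functions G_T for N variables and M clauses:
G_0(x₁,x₂,x₃) = x₃^M and, with μ = 1/(N−T),
G_{T+1}(x₁,x₂,x₃) = (1/f₁)·G_T(f₁,f₂,f₃) + (2 − 1/f₁)·G_T(0,f₂,f₃) − 2·G_T(0,0,0),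
where f₁ = x₁ + (μ/2)(1−2x₁), f₂ = x₂ + μ(x₁+1−2x₂), f₃ = x₃ + (3μ/2)(x₂+1−2x₃). -/
noncomputable def G (N M : ℕ) : ℕ → ℝ → ℝ → ℝ → ℝ
  | 0 => fun _ _ x₃ => x₃ ^ M
  | T + 1 => fun x₁ x₂ x₃ =>
      let μ : ℝ := 1 / ((N : ℝ) - (T : ℝ))
      let f₁ : ℝ := x₁ + (μ / 2) * (1 - 2 * x₁)
      let f₂ : ℝ := x₂ + μ * (x₁ + 1 - 2 * x₂)
      let f₃ : ℝ := x₃ + (3 * μ / 2) * (x₂ + 1 - 2 * x₃)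
      (1 / f₁) * G N M T f₁ f₂ f₃ + (2 - 1 / f₁) * G N M T 0 f₂ f₃ - 2 * G N M T 0 0 0

theorem pow_sub_mul_add_sum_eq_of_succ_eq {R : Type*} [CommRing R] {a b : ℕ → R} {c : R}
    (h : ∀ T, a (T + 1) = c * (a T - b T)) {N T : ℕ} (hT : T ≤ N) :
    c ^ (N - T) * a T + ∑ H ∈ Finset.range T, c ^ (N - H) * b H = c ^ N * a 0 := by
  induction T with
  | zero => simp
  | succ T ih =>
    have hpow : c ^ (N - (T + 1)) * c = c ^ (N - T) := by
      rw [← pow_succ]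
      congr 1
      omega
    rw [Finset.sum_range_succ, h, ← ih (by omega), ← hpow]
    ring

theorem G_succ_fixedPoint (N M T : ℕ) :
    G N M (T + 1) (1 / 2) (3 / 4) (7 / 8) =
      2 * (G N M T (1 / 2) (3 / 4) (7 / 8) - G N M T 0 0 0) := by
  simp only [G]
  norm_num
  ring

theorem conservation_identity_general (N M : ℕ) (T : ℕ) (hT : T ≤ N) :
    2 ^ (N - T) * G N M T (1 / 2) (3 / 4) (7 / 8) +
      ∑ H ∈ Finset.range T, 2 ^ (N - H) * G N M H 0 0 0 =
    2 ^ N * (7 / 8 : ℝ) ^ M :=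
  pow_sub_mul_add_sum_eq_of_succ_eq (a := fun T => G N M T (1 / 2) (3 / 4) (7 / 8))
    (b := fun H => G N M H 0 0 0) (G_succ_fixedPoint N M) hT

/-- Conservation of the expected number of satisfying assignments along #DPLL-UC. -/
theorem conservation_identity (N M : ℕ) (hN : 1 ≤ N) (T : ℕ) (hT : T ≤ N) :
    2 ^ (N - T) * G N M T (1 / 2) (3 / 4) (7 / 8) +
      ∑ H ∈ Finset.range T, 2 ^ (N - H) * G N M H 0 0 0 =
    2 ^ N * (7 / 8 : ℝ) ^ M :=
  conservation_identity_general N M T hT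
end
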